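/- arXiv:2410.23273 — 2 statements merged into one kernel-verified Lean document; each statement's English description precedes it below -/
import Mathlib

section
/- Let N' be a finite set of at least τ points in a metric space (d), where τ ≥ 1. For each i ∈ N', order the points of N' by their distance to i and let r_i be the distance from i to its τ-th closest point of N' (counting i itself). Let i* minimize r_i over i ∈ N', and let S* be a set of τ closest points of N' to i*. Then, for the average loss ℓ_i(S) = (1/|S|)·Σ_{j∈S} d(i,j), the set S* is a 4-approximate solution to the Most Cohesive Cluster problem on (N', τ): max_{i∈S*} ℓ_i(S*) ≤ 4·max_{i∈S'} ℓ_i(S') for every S' ⊆ N' with |S'| ≥ τ. -/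
open scoped Classical

/-- The maximum of `f` over the finite set `S` (`0` if `S` is empty). -/
noncomputable def maxOver {ι : Type*} (S : Finset ι) (f : ι → ℝ) : ℝ :=
  if h : S.Nonempty then S.sup' h f else 0

/-!
Let `ρ = r i*`. Every point of `S*` lies within `ρ` of `i*`, so by the triangle inequality all
pairwise distances in `S*` are at most `2ρ`, and so are the average losses. Conversely, any `S'`
with `|S'| ≥ τ` contains, for each of its points `i`, a point `j` with `d(i,j) ≥ r i ≥ ρ`;
averaging `d(i,j) ≤ d(i,k) + d(k,j)` over `k ∈ S'` gives `ρ ≤ ℓ_i(S') + ℓ_j(S')`, hence the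
maximal loss of `S'` is at least `ρ/2`.
-/

open Finset

section MaxOver

variable {ι : Type*} {S : Finset ι} {f : ι → ℝ}

theorem le_maxOver {i : ι} (hi : i ∈ S) : f i ≤ maxOver S f := by
  rw [maxOver, dif_pos ⟨i, hi⟩]
  exact le_sup' f hi

theorem maxOver_le {c : ℝ} (hS : S.Nonempty) (h : ∀ i ∈ S, f i ≤ c) : maxOver S f ≤ c := by
  rw [maxOver, dif_pos hS]
  exact sup'_le hS f h

end MaxOver

section AverageDistance

variable {X : Type*} [PseudoMetricSpace X]

noncomputable def avgDist (S : Finset X) (i : X) : ℝ :=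
  (∑ j ∈ S, dist i j) / S.card

theorem avgDist_le_of_forall_dist_le {S : Finset X} {i : X} {b : ℝ} (hS : S.Nonempty)
    (h : ∀ j ∈ S, dist i j ≤ b) : avgDist S i ≤ b := by
  rw [avgDist, div_le_iff₀ (by exact_mod_cast hS.card_pos)]
  calc ∑ j ∈ S, dist i j ≤ ∑ _j ∈ S, b := sum_le_sum h
    _ = b * S.card := by rw [sum_const, nsmul_eq_mul, mul_comm]

theorem maxOver_avgDist_le_two_mul {S : Finset X} {c : X} {ρ : ℝ} (hS : S.Nonempty)
    (h : ∀ j ∈ S, dist c j ≤ ρ) : maxOver S (avgDist S) ≤ 2 * ρ := by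
  refine maxOver_le hS fun i hi => avgDist_le_of_forall_dist_le hS fun j hj => ?_
  calc dist i j ≤ dist c i + dist c j := dist_triangle_left i j c
    _ ≤ ρ + ρ := add_le_add (h i hi) (h j hj)
    _ = 2 * ρ := by ring

theorem dist_le_avgDist_add_avgDist {S : Finset X} (hS : S.Nonempty) (i j : X) :
    dist i j ≤ avgDist S i + avgDist S j := by
  rw [avgDist, avgDist, ← add_div, le_div_iff₀ (by exact_mod_cast hS.card_pos), ← sum_add_distrib]
  calc dist i j * S.card = ∑ _k ∈ S, dist i j := by rw [sum_const, nsmul_eq_mul, mul_comm]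
    _ ≤ ∑ k ∈ S, (dist i k + dist j k) := sum_le_sum fun k _ => dist_triangle_right i j k

theorem dist_le_two_mul_maxOver_avgDist {S : Finset X} {i j : X} (hi : i ∈ S) (hj : j ∈ S) :
    dist i j ≤ 2 * maxOver S (avgDist S) := by
  calc dist i j ≤ avgDist S i + avgDist S j := dist_le_avgDist_add_avgDist ⟨i, hi⟩ i j
    _ ≤ maxOver S (avgDist S) + maxOver S (avgDist S) := add_le_add (le_maxOver hi) (le_maxOver hj)
    _ = 2 * maxOver S (avgDist S) := by ring

end AverageDistance

section Neighbours

variable {X : Type*} [PseudoMetricSpace X] {N : Finset X}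

theorem dist_le_of_mem_closest {c : X} {ρ : ℝ} {S : Finset X}
    (hball : S.card ≤ (N.filter fun j => dist c j ≤ ρ).card)
    (hclosest : ∀ j ∈ S, ∀ j' ∈ N, j' ∉ S → dist c j ≤ dist c j') {j : X} (hj : j ∈ S) :
    dist c j ≤ ρ := by
  by_contra! hfar
  have hsub : (N.filter fun k => dist c k ≤ ρ) ⊆ S.erase j := by
    intro k hk
    have hkj : dist c k < dist c j := (mem_filter.mp hk).2.trans_lt hfar
    refine mem_erase.mpr ⟨fun hk' => hkj.ne (by rw [hk']), ?_⟩
    by_contra hkS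
    exact hkj.not_ge (hclosest j hj k (mem_filter.mp hk).1 hkS)
  have := card_le_card hsub
  have := card_erase_of_mem hj
  have := card_pos.mpr ⟨j, hj⟩
  omega

theorem exists_mem_le_dist {i : X} {ρ : ℝ} {S : Finset X} (hS : S ⊆ N)
    (hcard : (N.filter fun j => dist i j < ρ).card < S.card) : ∃ j ∈ S, ρ ≤ dist i j := by
  by_contra! hnear
  have : S ⊆ N.filter fun j => dist i j < ρ := fun j hj => mem_filter.mpr ⟨hS hj, hnear j hj⟩
  exact (card_le_card this).not_gt hcard

end Neighbours

theorem stmt7_general {X : Type*} [MetricSpace X] (N' : Finset X) (τ : ℕ)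
    (r : X → ℝ)
    (hr : ∀ i ∈ N', τ ≤ (N'.filter fun j => dist i j ≤ r i).card ∧
                    (N'.filter fun j => dist i j < r i).card < τ)
    (istar : X) (histar : istar ∈ N') (hmin : ∀ i ∈ N', r istar ≤ r i)
    (Sstar : Finset X) (hScard : Sstar.card = τ)
    (hclosest : ∀ j ∈ Sstar, ∀ j' ∈ N', j' ∉ Sstar → dist istar j ≤ dist istar j') :
    ∀ S' ⊆ N', τ ≤ S'.card →
      maxOver Sstar (fun i => (∑ j ∈ Sstar, dist i j) / (Sstar.card : ℝ)) ≤
        4 * maxOver S' (fun i => (∑ j ∈ S', dist i j) / (S'.card : ℝ)) := by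
  intro S' hS' hτS'
  have hτ : 0 < τ := (Nat.zero_le _).trans_lt (hr istar histar).2
  obtain ⟨i, hi⟩ : S'.Nonempty := card_pos.mp (by omega)
  obtain ⟨j, hj, hij⟩ := exists_mem_le_dist hS' ((hr i (hS' hi)).2.trans_le hτS')
  have hball : ∀ k ∈ Sstar, dist istar k ≤ r istar :=
    fun k => dist_le_of_mem_closest (hScard ▸ (hr istar histar).1) hclosest
  calc maxOver Sstar (avgDist Sstar)
      ≤ 2 * r istar := maxOver_avgDist_le_two_mul (card_pos.mp (by omega)) hball
    _ ≤ 2 * dist i j := by gcongr; exact (hmin i (hS' hi)).trans hij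
    _ ≤ 2 * (2 * maxOver S' (avgDist S')) := by gcongr; exact dist_le_two_mul_maxOver_avgDist hi hj
    _ = 4 * maxOver S' (avgDist S') := by ring

/-- Smallest agent ball gives a 4-approximation to the Most Cohesive Cluster problem for the
average loss: if `r i` is the distance from `i` to its `τ`-th closest point of `N'` (counting
`i` itself), `i*` minimizes `r` over `N'`, and `S*` is a set of `τ` closest points of `N'` to
`i*`, then `max_{i ∈ S*} ℓ_i(S*) ≤ 4 · max_{i ∈ S'} ℓ_i(S')` for every `S' ⊆ N'` with
`|S'| ≥ τ`, where `ℓ_i(S) = (1/|S|)·Σ_{j ∈ S} d(i,j)`. -/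
theorem stmt7 {X : Type*} [MetricSpace X] (N' : Finset X) (τ : ℕ) (hτ : 1 ≤ τ)
    (hcard : τ ≤ N'.card)
    (r : X → ℝ)
    (hr : ∀ i ∈ N', τ ≤ (N'.filter fun j => dist i j ≤ r i).card ∧
                    (N'.filter fun j => dist i j < r i).card < τ)
    (istar : X) (histar : istar ∈ N') (hmin : ∀ i ∈ N', r istar ≤ r i)
    (Sstar : Finset X) (hsub : Sstar ⊆ N') (hScard : Sstar.card = τ)
    (hclosest : ∀ j ∈ Sstar, ∀ j' ∈ N', j' ∉ Sstar → dist istar j ≤ dist istar j') :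
    ∀ S' ⊆ N', τ ≤ S'.card →
      maxOver Sstar (fun i => (∑ j ∈ Sstar, dist i j) / (Sstar.card : ℝ)) ≤
        4 * maxOver S' (fun i => (∑ j ∈ S', dist i j) / (S'.card : ℝ)) :=
  stmt7_general N' τ r hr istar histar hmin Sstar hScard hclosest
end

section
/- Let N' be a finite set of at least τ points in a metric space (d), where τ ≥ 1. For each i ∈ N', order the points of N' by their distance to i and let r_i be the distance from i to its τ-th closest point of N' (counting i itself). Let i* minimize r_i over i ∈ N', and let S* be a set of τ closest points of N' to i*. Then, for the maximum loss ℓ_i(S) = max_{j∈S} d(i,j), the set S* is a 2-approximate solution to the Most Cohesive Cluster problem on (N', τ): max_{i∈S*} ℓ_i(S*) ≤ 2·max_{i∈S'} ℓ_i(S') for every S' ⊆ N' with |S'| ≥ τ. -/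
open scoped Classical

lemma le_maxOver_s8 {ι : Type*} {S : Finset ι} {f : ι → ℝ} {a : ι} (ha : a ∈ S) :
    f a ≤ maxOver S f := by
  have h : S.Nonempty := ⟨a, ha⟩
  rw [maxOver, dif_pos h]
  exact Finset.le_sup' _ ha

lemma maxOver_le_s8 {ι : Type*} {S : Finset ι} {f : ι → ℝ} {b : ℝ} (h : S.Nonempty)
    (hb : ∀ a ∈ S, f a ≤ b) : maxOver S f ≤ b := by
  rw [maxOver, dif_pos h]
  exact Finset.sup'_le _ _ hb

/-- Smallest agent ball gives a 2-approximation to the Most Cohesive Cluster problem for the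
maximum loss: if `r i` is the distance from `i` to its `τ`-th closest point of `N'` (counting
`i` itself), `i*` minimizes `r` over `N'`, and `S*` is a set of `τ` closest points of `N'` to
`i*`, then `max_{i ∈ S*} ℓ_i(S*) ≤ 2 · max_{i ∈ S'} ℓ_i(S')` for every `S' ⊆ N'` with
`|S'| ≥ τ`, where `ℓ_i(S) = max_{j ∈ S} d(i,j)`. -/
theorem stmt8 {X : Type*} [MetricSpace X] (N' : Finset X) (τ : ℕ) (hτ : 1 ≤ τ)
    (hcard : τ ≤ N'.card)
    (r : X → ℝ)
    (hr : ∀ i ∈ N', τ ≤ (N'.filter fun j => dist i j ≤ r i).card ∧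
                    (N'.filter fun j => dist i j < r i).card < τ)
    (istar : X) (histar : istar ∈ N') (hmin : ∀ i ∈ N', r istar ≤ r i)
    (Sstar : Finset X) (hsub : Sstar ⊆ N') (hScard : Sstar.card = τ)
    (hclosest : ∀ j ∈ Sstar, ∀ j' ∈ N', j' ∉ Sstar → dist istar j ≤ dist istar j') :
    ∀ S' ⊆ N', τ ≤ S'.card →
      maxOver Sstar (fun i => maxOver Sstar (fun j => dist i j)) ≤
        2 * maxOver S' (fun i => maxOver S' (fun j => dist i j)) := by
  intro S' hS'sub hS'card
  have hSne : Sstar.Nonempty := Finset.card_pos.mp (by omega)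
  have hS'ne : S'.Nonempty := Finset.card_pos.mp (by omega)
  -- Key A: every point of Sstar is within r istar of istar
  have hA : ∀ j ∈ Sstar, dist istar j ≤ r istar := by
    intro j hj
    by_contra hgt
    push_neg at hgt
    set F := N'.filter fun j => dist istar j ≤ r istar with hF
    have hFcard : τ ≤ F.card := (hr istar histar).1
    have hjF : j ∉ F := by
      simp only [hF, Finset.mem_filter, not_and, not_le]
      intro _; exact hgt
    by_cases hFS : F ⊆ Sstar
    · have : F = Sstar := Finset.eq_of_subset_of_card_le hFS (by omega)
      exact hjF (this ▸ hj)
    · obtain ⟨j', hj'F, hj'S⟩ := Finset.not_subset.mp hFS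
      have hj'N : j' ∈ N' := (Finset.mem_filter.mp hj'F).1
      have hle : dist istar j' ≤ r istar := (Finset.mem_filter.mp hj'F).2
      have := hclosest j hj j' hj'N hj'S
      linarith
  -- set L := RHS max
  set L := maxOver S' (fun i => maxOver S' (fun j => dist i j)) with hL
  have hLbound : ∀ i ∈ S', ∀ j ∈ S', dist i j ≤ L := by
    intro i hi j hj
    have h1 : maxOver S' (fun j => dist i j) ≤ L := le_maxOver_s8 (f := fun i => maxOver S' (fun j => dist i j)) hi
    have h2 : dist i j ≤ maxOver S' (fun j => dist i j) := le_maxOver_s8 hj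
    linarith
  -- Key B: r istar ≤ L
  have hB : r istar ≤ L := by
    obtain ⟨i, hi⟩ := hS'ne
    have hiN : i ∈ N' := hS'sub hi
    have hri : r i ≤ L := by
      by_contra hlt
      push_neg at hlt
      have hsub2 : S' ⊆ N'.filter fun j => dist i j < r i := by
        intro j hj
        refine Finset.mem_filter.mpr ⟨hS'sub hj, ?_⟩
        exact lt_of_le_of_lt (hLbound i hi j hj) hlt
      have := Finset.card_le_card hsub2
      have := (hr i hiN).2
      omega
    exact le_trans (hmin i hiN) hri
  -- Conclude
  apply maxOver_le_s8 hSne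
  intro i hi
  apply maxOver_le_s8 hSne
  intro j hj
  have h1 := hA i hi
  have h2 := hA j hj
  have := dist_triangle i istar j
  rw [dist_comm i istar] at this
  linarith
end
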